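/- arXiv:2006.12131 — 7 statements merged into one kernel-verified Lean document; each statement's English description precedes it below -/
import Mathlib

section
/- For (a,b) ∈ ℝ², there exists t₀ ∈ ℝ with f_{a,b}(t₀) = 0 if and only if either (a ≠ 0 and b = 0) or (a ∈ (−2,0) and b² = −a² − 2a). -/
/-! With `z = a + bi`, the polynomial is `|t z² + z + 1|²`, the sum of the squares of the real part
`t (a² - b²) + a + 1` and the imaginary part `b (2 a t + 1)`, so it has a real root `t` exactly when
both vanish. For `b = 0` this is the linear equation `t a² + a + 1 = 0`, solvable iff `a ≠ 0`.
For `b ≠ 0` it forces `t = -1 / (2 a)`, and substituting gives `b² = -a² - 2 a`; positivity of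
`b² = -a (a + 2)` then places `a` in `(-2, 0)`. -/

namespace RootsFab

lemma quadratic_eq_re_mul_self_add_im_mul_self (a b t : ℝ) :
    (a^2 + b^2)^2 * t^2 + 2 * (a^2 + a^3 + a * b^2 - b^2) * t + (a + 1)^2 + b^2
      = (t * (a^2 - b^2) + a + 1) * (t * (a^2 - b^2) + a + 1)
        + (b * (2 * a * t + 1)) * (b * (2 * a * t + 1)) := by
  ring

lemma exists_mul_sq_add_add_one_eq_zero_iff (a : ℝ) :
    (∃ t : ℝ, t * a^2 + a + 1 = 0) ↔ a ≠ 0 := by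
  constructor
  · rintro ⟨t, ht⟩ rfl
    norm_num at ht
  · intro ha
    exact ⟨-(a + 1) / a^2, by field_simp; ring⟩

lemma exists_re_im_eq_zero_iff_of_ne_zero {a b : ℝ} (hb : b ≠ 0) :
    (∃ t : ℝ, t * (a^2 - b^2) + a + 1 = 0 ∧ 2 * a * t + 1 = 0) ↔ b^2 = -a^2 - 2*a := by
  constructor
  · rintro ⟨t, hre, him⟩
    linear_combination 2 * a * hre - (a^2 - b^2) * him
  · intro hb2
    have ha : a ≠ 0 := by
      rintro rfl
      exact hb (pow_eq_zero_iff two_ne_zero |>.mp (by simpa using hb2))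
    refine ⟨-1 / (2 * a), ?_, by field_simp; ring⟩
    rw [hb2]
    field_simp
    ring

lemma mem_Ioo_of_sq_eq_neg_sq_sub {a b : ℝ} (hb : b ≠ 0) (hb2 : b^2 = -a^2 - 2*a) :
    a ∈ Set.Ioo (-2 : ℝ) 0 := by
  have : 0 < b^2 := by positivity
  constructor <;> nlinarith

end RootsFab

open RootsFab in
theorem roots_f_ab_real (a b : ℝ) :
    (∃ t₀ : ℝ, (a^2 + b^2)^2 * t₀^2 + 2 * (a^2 + a^3 + a * b^2 - b^2) * t₀ + (a + 1)^2 + b^2 = 0)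
      ↔ (a ≠ 0 ∧ b = 0) ∨ (a ∈ Set.Ioo (-2 : ℝ) 0 ∧ b^2 = -a^2 - 2*a) := by
  simp only [quadratic_eq_re_mul_self_add_im_mul_self, mul_self_add_mul_self_eq_zero]
  by_cases hb : b = 0
  · subst hb
    simp only [zero_mul, and_true, ne_eq, OfNat.ofNat_ne_zero, not_false_eq_true, zero_pow, sub_zero,
      exists_mul_sq_add_add_one_eq_zero_iff]
    exact ⟨Or.inl, fun h => h.elim id fun ⟨⟨_, ha⟩, _⟩ => ha.ne⟩
  · simp only [mul_eq_zero, hb, false_or, exists_re_im_eq_zero_iff_of_ne_zero hb, and_false,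
      false_or]
    exact ⟨fun hb2 => ⟨mem_Ioo_of_sq_eq_neg_sq_sub hb hb2, hb2⟩, And.right⟩
end

section
/- For (a,b) ∈ ℝ², there exists t₀ ∈ [0,1] with f_{a,b}(t₀) = 0 if and only if either (a ≤ −1 and b = 0) or (a ∈ (−2, −1/2] and b² = −a² − 2a). -/
/-! The quadratic is `|t z² + z + 1|²` for `z = a + b i`, a sum of the squares of
`t (a² - b²) + a + 1` and `b (2 a t + 1)`. So a root `t` makes both vanish. If `b = 0` this
only asks for `t a² = -(a + 1)` with `t ∈ [0, 1]`, i.e. `a ≤ -1`; if `b ≠ 0` it forces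
`t = -1 / (2a)`, which lies in `[0, 1]` iff `a ≤ -1/2`, and the real part then vanishes iff
`b² = -a² - 2a`, which is positive iff `-2 < a < 0`. -/

open Set

theorem f_ab_eq_zero_iff (a b t : ℝ) :
    (a^2 + b^2)^2 * t^2 + 2 * (a^2 + a^3 + a * b^2 - b^2) * t + (a + 1)^2 + b^2 = 0 ↔
      t * (a^2 - b^2) + a + 1 = 0 ∧ b * (2 * a * t + 1) = 0 := by
  rw [← mul_self_add_mul_self_eq_zero]
  constructor <;> intro h <;> linear_combination h

theorem exists_mem_Icc_mul_sq_add_add_one_eq_zero_iff (a : ℝ) :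
    (∃ t ∈ Icc (0 : ℝ) 1, t * a^2 + a + 1 = 0) ↔ a ≤ -1 := by
  constructor
  · rintro ⟨t, ⟨ht0, -⟩, ht⟩
    nlinarith [mul_nonneg ht0 (sq_nonneg a)]
  · intro ha
    have ha0 : a ≠ 0 := by linarith
    have ha2 : 0 < a^2 := by positivity
    refine ⟨-(a + 1) / a^2, ⟨by apply div_nonneg <;> linarith, ?_⟩, ?_⟩
    · rw [div_le_one ha2]; nlinarith
    · field_simp; ring

theorem exists_mem_Icc_common_root_iff {a b : ℝ} (hb : b ≠ 0) :
    (∃ t ∈ Icc (0 : ℝ) 1, t * (a^2 - b^2) + a + 1 = 0 ∧ 2 * a * t + 1 = 0) ↔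
      a ∈ Ioc (-2) (-1/2) ∧ b^2 = -a^2 - 2 * a := by
  constructor
  · rintro ⟨t, ⟨ht0, ht1⟩, hre, him⟩
    have hb2 : b^2 = -a^2 - 2 * a := by linear_combination 2 * a * hre - (a^2 - b^2) * him
    have ha : a < 0 := by nlinarith
    refine ⟨⟨?_, by nlinarith⟩, hb2⟩
    nlinarith [sq_pos_of_ne_zero hb]
  · rintro ⟨⟨ha2, ha1⟩, hb2⟩
    have ha : 2 * a < 0 := by linarith
    have ha0 : a ≠ 0 := by linarith
    refine ⟨-1 / (2 * a), ⟨?_, ?_⟩, ?_, ?_⟩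
    · rw [le_div_iff_of_neg ha]; linarith
    · rw [div_le_iff_of_neg ha]; linarith
    · rw [hb2]; field_simp; ring
    · field_simp; ring

theorem roots_f_ab_unit_interval (a b : ℝ) :
    (∃ t₀ ∈ Set.Icc (0:ℝ) 1,
        (a^2 + b^2)^2 * t₀^2 + 2 * (a^2 + a^3 + a * b^2 - b^2) * t₀ + (a + 1)^2 + b^2 = 0)
      ↔ (a ≤ -1 ∧ b = 0) ∨ (a ∈ Set.Ioc (-2 : ℝ) (-1/2) ∧ b^2 = -a^2 - 2*a) := by
  simp_rw [f_ab_eq_zero_iff]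
  rcases eq_or_ne b 0 with rfl | hb
  · have hsecond : ¬(a ∈ Ioc (-2 : ℝ) (-1/2) ∧ (0 : ℝ)^2 = -a^2 - 2 * a) := by
      rintro ⟨⟨ha2, ha1⟩, h⟩
      nlinarith
    rw [or_iff_left hsecond]
    simpa using exists_mem_Icc_mul_sq_add_add_one_eq_zero_iff a
  · simpa [hb] using exists_mem_Icc_common_root_iff hb
end

section
/- The set R^{MS} = {z ∈ ℂ : 2Re(z)(1 + |z|²/2) + 2(Re(z))² + |z|⁴/3 < 0} is contained in R^{Mid} = {z ∈ ℂ : |z²/2 + z + 1|² < 1}, which in turn is contained in the left half-plane {z ∈ ℂ : Re(z) < 0}. -/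
/-!
Writing `x = Re z` and `r = ‖z‖²`, expanding `|1 + z + z²/2|²` and using `r + Re(z²) = 2x²` gives
`|1 + z + z²/2|² - 1 = 2x(1 + r/2) + 2x² + r²/4`.
This differs from the mean-square expression only in `r²/4` versus `r²/3`, which gives the first
inclusion; and since `2x² + r²/4 ≥ 0`, negativity forces `2x(1 + r/2) < 0`, that is `x < 0`.
-/

open Complex

theorem norm_sq_sq_div_two_add_add_one (z : ℂ) :
    ‖z ^ 2 / 2 + z + 1‖ ^ 2 = 1 + 2 * z.re * (1 + ‖z‖ ^ 2 / 2) + 2 * z.re ^ 2 + ‖z‖ ^ 4 / 4 := by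
  have h4 : ‖z‖ ^ 4 = (‖z‖ ^ 2) ^ 2 := by ring
  rw [h4, Complex.sq_norm, Complex.sq_norm, Complex.normSq_apply, Complex.normSq_apply]
  simp only [add_re, add_im, div_ofNat_re, div_ofNat_im, pow_two, mul_re, mul_im, one_re, one_im]
  ring

theorem RMS_subset_RMid_subset_halfplane :
    {z : ℂ | 2 * z.re * (1 + ‖z‖^2 / 2) + 2 * z.re^2 + ‖z‖^4 / 3 < 0}
      ⊆ {z : ℂ | ‖z^2 / 2 + z + 1‖^2 < 1} ∧
    {z : ℂ | ‖z^2 / 2 + z + 1‖^2 < 1} ⊆ {z : ℂ | z.re < 0} := by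
  constructor
  · intro z hz
    simp only [Set.mem_ofPred_eq, norm_sq_sq_div_two_add_add_one] at hz ⊢
    linarith [pow_nonneg (norm_nonneg z) 4]
  · intro z hz
    simp only [Set.mem_ofPred_eq, norm_sq_sq_div_two_add_add_one] at hz ⊢
    have hlin : z.re * (1 + ‖z‖ ^ 2 / 2) < 0 := by
      linarith [sq_nonneg z.re, pow_nonneg (norm_nonneg z) 4]
    exact neg_of_mul_neg_left hlin (by positivity)
end

section
/- The real interval of mean-square stability I^{MS} = {x ∈ ℝ : 2x(1 + x²/2) + 2x² + x⁴/3 < 0} equals the open interval (x₀, 0), where x₀ = −1 − (√2 − 1)^{−1/3} + (√2 − 1)^{1/3}. Equivalently, for x < 0, the condition is x³ + 3x² + 6x + 6 > 0. -/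
/-!
The stability function factors as `x * p x / 3` with `p x = x^3 + 3x^2 + 6x + 6 = (x+1)^3 + 3(x+1) + 2`.
So `p` is strictly increasing with `p 0 = 6 > 0`, and the function is negative exactly when `x < 0`
and `p x > 0`, i.e. for `x` between the unique real root of `p` and `0`. Cardano's substitution
`x + 1 = c - c⁻¹` turns `p x = 0` into `c^3 - c^(-3) = -2`, solved by `c^3 = √2 - 1`.
-/

open Real

def msCubic (x : ℝ) : ℝ := x ^ 3 + 3 * x ^ 2 + 6 * x + 6

lemma msCubic_eq_depressed (x : ℝ) : msCubic x = (x + 1) ^ 3 + 3 * (x + 1) + 2 := by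
  unfold msCubic; ring

lemma msCubic_strictMono : StrictMono msCubic := by
  intro x y hxy
  simp only [msCubic_eq_depressed]
  have hcube : (x + 1) ^ 3 < (y + 1) ^ 3 := Odd.strictMono_pow (by decide) (by linarith)
  linarith

lemma msCubic_pos_of_nonneg {x : ℝ} (hx : 0 ≤ x) : 0 < msCubic x := by
  unfold msCubic; positivity

lemma ms_stability_eq (x : ℝ) :
    2 * x * (1 + x ^ 2 / 2) + 2 * x ^ 2 + x ^ 4 / 3 = x * msCubic x / 3 := by
  unfold msCubic; ring

lemma ms_stability_neg_iff (x : ℝ) :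
    2 * x * (1 + x ^ 2 / 2) + 2 * x ^ 2 + x ^ 4 / 3 < 0 ↔ x < 0 ∧ 0 < msCubic x := by
  rw [ms_stability_eq, div_lt_iff₀ three_pos, zero_mul, mul_neg_iff,
    or_iff_right fun h => (msCubic_pos_of_nonneg h.1.le).not_gt h.2]

lemma depressed_cubic_cardano {c : ℝ} (hc : c ≠ 0) :
    (c - c⁻¹) ^ 3 + 3 * (c - c⁻¹) = c ^ 3 - (c ^ 3)⁻¹ := by
  field_simp; ring

lemma msCubic_cardano {a : ℝ} (ha : 0 < a) :
    msCubic (-1 - a ^ (-(1:ℝ) / 3) + a ^ ((1:ℝ) / 3)) = a - a⁻¹ + 2 := by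
  set c := a ^ ((1:ℝ) / 3)
  have hc : c ≠ 0 := (rpow_pos_of_pos ha _).ne'
  have hc3 : c ^ 3 = a := by
    simpa [c, one_div] using rpow_inv_natCast_pow ha.le (n := 3) (by norm_num)
  have hinv : a ^ (-(1:ℝ) / 3) = c⁻¹ := by rw [neg_div, rpow_neg ha.le]
  rw [msCubic_eq_depressed, hinv, show -1 - c⁻¹ + c + 1 = c - c⁻¹ by ring,
    depressed_cubic_cardano hc, hc3]

lemma sqrt_two_sub_one_sub_inv : (√2 - 1) - (√2 - 1)⁻¹ = -2 := by
  have h2 : √2 ^ 2 = 2 := sq_sqrt (by norm_num)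
  have hne : √2 - 1 ≠ 0 := by nlinarith
  field_simp
  linear_combination h2

theorem IMS_eq_Ioo :
    {x : ℝ | 2 * x * (1 + x^2 / 2) + 2 * x^2 + x^4 / 3 < 0}
      = Set.Ioo (-1 - (Real.sqrt 2 - 1) ^ (-(1:ℝ)/3) + (Real.sqrt 2 - 1) ^ ((1:ℝ)/3)) 0 ∧
    ∀ x : ℝ, x < 0 →
      (2 * x * (1 + x^2 / 2) + 2 * x^2 + x^4 / 3 < 0 ↔ x^3 + 3*x^2 + 6*x + 6 > 0) := by
  refine ⟨?_, fun x hx => (ms_stability_neg_iff x).trans (and_iff_right hx)⟩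
  have hroot : msCubic (-1 - (√2 - 1) ^ (-(1:ℝ)/3) + (√2 - 1) ^ ((1:ℝ)/3)) = 0 := by
    rw [msCubic_cardano (by simpa using one_lt_sqrt_two), sqrt_two_sub_one_sub_inv]
    norm_num
  ext x
  rw [Set.mem_ofPred_eq, ms_stability_neg_iff, Set.mem_Ioo, ← hroot, msCubic_strictMono.lt_iff_lt,
    and_comm]
end

section
/- For every b ∈ ℝ, ∫₀¹ ln(b⁴t² − 2b²t + b² + 1) dt ≥ 0. In particular, the asymptotic stability region R^{AS} of the randomized Runge–Kutta method contains no purely imaginary points. -/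
/-!
Writing `f(t) = b⁴t² − 2b²t + b² + 1 = b² + (b²t − 1)²`, the inequality `log x ≥ 1 − 1/x` gives
`∫₀¹ log f ≥ 1 − ∫₀¹ 1/f`, and the substitution `u = b²t − 1` together with the addition formula
for `arctan` evaluates `∫₀¹ 1/f = arctan(|b|³)/|b|³ ≤ 1`. The complex statement is half of the
real one, since `f(t) = ‖t(bi)² + bi + 1‖²`.
-/

namespace Real

theorem arctan_le_self {x : ℝ} (hx : 0 ≤ x) : arctan x ≤ x := by
  simpa only [tan_arctan] using le_tan (arctan_nonneg.mpr hx) (arctan_lt_pi_div_two x)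

theorem arctan_sq_sub_one_div_add_arctan_inv {c : ℝ} (hc : 0 < c) :
    arctan ((c ^ 2 - 1) / c) + arctan c⁻¹ = arctan (c ^ 3) := by
  have hprod : (c ^ 2 - 1) / c * c⁻¹ < 1 := by
    rw [div_mul_eq_mul_div, div_lt_one (by positivity)]
    field_simp
    linarith
  rw [arctan_add hprod]
  congr 1
  field_simp
  ring

end Real

open Real

theorem integral_inv_sq_add_sq_mul_sub_one_sq {c : ℝ} (hc : 0 < c) :
    ∫ t in (0:ℝ)..1, (c ^ 2 + (c ^ 2 * t - 1) ^ 2)⁻¹ = arctan (c ^ 3) / c ^ 3 := by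
  rw [intervalIntegral.integral_comp_mul_sub (fun x => (c ^ 2 + x ^ 2)⁻¹) (by positivity),
    integral_inv_sq_add_sq hc.ne', smul_eq_mul, mul_zero, mul_one, zero_sub, neg_div, arctan_neg,
    sub_neg_eq_add, one_div c, arctan_sq_sub_one_div_add_arctan_inv hc]
  field_simp

theorem integral_one_sub_inv_le_integral_log {f : ℝ → ℝ} {a b : ℝ} (hab : a ≤ b)
    (hf : ContinuousOn f (Set.Icc a b)) (hpos : ∀ x ∈ Set.Icc a b, 0 < f x) :
    ∫ x in a..b, (1 - (f x)⁻¹) ≤ ∫ x in a..b, log (f x) := by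
  have hne : ∀ x ∈ Set.Icc a b, f x ≠ 0 := fun x hx => (hpos x hx).ne'
  refine intervalIntegral.integral_mono_on hab ?_ ?_ fun x hx => one_sub_inv_le_log_of_pos (hpos x hx)
  · exact (continuousOn_const.sub (hf.inv₀ hne)).intervalIntegrable_of_Icc hab
  · exact (hf.log hne).intervalIntegrable_of_Icc hab

theorem integral_log_quadratic_nonneg (b : ℝ) :
    0 ≤ ∫ t in (0:ℝ)..1, log (b ^ 4 * t ^ 2 - 2 * b ^ 2 * t + b ^ 2 + 1) := by
  rcases eq_or_ne b 0 with rfl | hb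
  · simp
  have hc : 0 < |b| := abs_pos.mpr hb
  have hsq : ∀ t, b ^ 4 * t ^ 2 - 2 * b ^ 2 * t + b ^ 2 + 1 = |b| ^ 2 + (|b| ^ 2 * t - 1) ^ 2 :=
    fun t => by rw [sq_abs]; ring
  simp only [hsq]
  calc (0:ℝ) ≤ 1 - arctan (|b| ^ 3) / |b| ^ 3 :=
        sub_nonneg.mpr ((div_le_one (pow_pos hc 3)).mpr (arctan_le_self (by positivity)))
    _ = ∫ t in (0:ℝ)..1, (1 - (|b| ^ 2 + (|b| ^ 2 * t - 1) ^ 2)⁻¹) := by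
        have hcont : Continuous fun t : ℝ => (|b| ^ 2 + (|b| ^ 2 * t - 1) ^ 2)⁻¹ :=
          (by fun_prop : Continuous _).inv₀ fun t => by positivity
        rw [intervalIntegral.integral_sub intervalIntegrable_const (hcont.intervalIntegrable 0 1),
          integral_inv_sq_add_sq_mul_sub_one_sq hc, intervalIntegral.integral_const, sub_zero, one_smul]
    _ ≤ _ := integral_one_sub_inv_le_integral_log zero_le_one (by fun_prop) fun t _ => by positivity

open Complex

theorem norm_sq_mul_mul_I_sq_add_mul_I_add_one (b t : ℝ) :
    ‖(t:ℂ) * ((b:ℂ) * I) ^ 2 + (b:ℂ) * I + 1‖ ^ 2 = b ^ 4 * t ^ 2 - 2 * b ^ 2 * t + b ^ 2 + 1 := by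
  have hz : (t:ℂ) * ((b:ℂ) * I) ^ 2 + (b:ℂ) * I + 1 = ((1 - b ^ 2 * t : ℝ) : ℂ) + b * I := by
    push_cast
    linear_combination (t:ℂ) * (b:ℂ) ^ 2 * I_sq
  rw [hz, Complex.sq_norm, normSq_add_mul_I]
  ring

theorem integral_log_f0b_nonneg (b : ℝ) :
    (0 ≤ ∫ t in (0:ℝ)..1, Real.log (b^4 * t^2 - 2 * b^2 * t + b^2 + 1)) ∧
    ¬ ((∫ t in (0:ℝ)..1,
        Real.log ‖(t:ℂ) * ((b:ℂ) * I)^2 + (b:ℂ) * I + 1‖) < 0) := by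
  have hlog : ∀ t : ℝ, Real.log ‖(t:ℂ) * ((b:ℂ) * I)^2 + (b:ℂ) * I + 1‖
      = Real.log (b^4 * t^2 - 2 * b^2 * t + b^2 + 1) / 2 := fun t => by
    rw [← norm_sq_mul_mul_I_sq_add_mul_I_add_one, Real.log_pow]
    ring
  simp only [hlog, intervalIntegral.integral_div, not_lt]
  exact ⟨integral_log_quadratic_nonneg b, div_nonneg (integral_log_quadratic_nonneg b) zero_le_two⟩
end

section
/- Define g: (−∞,−1] → ℝ by g(x) = (x²+x+1)ln(x²+x+1) − (x+1)ln(−(x+1)) − x² for x < −1 and g(−1) = −1. Then g is convex on (−∞,−1], with g''(x) = 2ln(x²+x+1) + (2x+1)²/(x²+x+1) + 1/(−(x+1)) > 0 for x < −1, and consequently g(x) < 0 for all x ∈ [−2,−1]. -/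
/-!
With `φ t = t log t`, `u = x² + x + 1` and `v = -(x + 1)`, on `x < -1` the function is
`g = φ ∘ u + φ ∘ v - x²`. Since `φ' = log + 1`, `u' = 2x + 1` and `v' = -1`, this gives
`g' = (2x + 1) log u - log v` and hence the stated `g''`, whose three terms are positive because
`u > 1` and `v > 0`. As `φ` is continuous on `ℝ` with `φ 0 = 0`, the expression
`φ ∘ u + φ ∘ v - x²` is continuous and equals `-1` at `x = -1`, so `g` is continuous on
`(-∞, -1]` and hence convex there. A convex function is bounded on a segment by the larger of its
endpoint values, and `g (-1) = -1`, `g (-2) = 3 log 3 - 4 < 0`.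
-/

open Real Set Filter Topology

noncomputable def g (x : ℝ) : ℝ :=
  if x < -1 then
    (x^2 + x + 1) * Real.log (x^2 + x + 1) - (x + 1) * Real.log (-(x + 1)) - x^2
  else -1

noncomputable def G (x : ℝ) : ℝ :=
  (x^2 + x + 1) * log (x^2 + x + 1) + -(x + 1) * log (-(x + 1)) - x^2

noncomputable def G' (x : ℝ) : ℝ :=
  (2*x + 1) * log (x^2 + x + 1) - log (-(x + 1))

noncomputable def G'' (x : ℝ) : ℝ :=
  2 * log (x^2 + x + 1) + (2*x + 1)^2 / (x^2 + x + 1) + 1 / (-(x + 1))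

lemma sq_add_self_add_one_pos (x : ℝ) : 0 < x^2 + x + 1 := by
  nlinarith [sq_nonneg (x + 1/2)]

lemma one_lt_sq_add_self_add_one {x : ℝ} (hx : x < -1) : 1 < x^2 + x + 1 := by
  nlinarith

lemma continuous_G : Continuous G := by
  unfold G
  fun_prop

lemma hasDerivAt_sq_add_self_add_one (x : ℝ) :
    HasDerivAt (fun x : ℝ => x^2 + x + 1) (2*x + 1) x := by
  simpa using ((hasDerivAt_pow 2 x).add (hasDerivAt_id x)).add_const 1

lemma hasDerivAt_neg_add_one (x : ℝ) : HasDerivAt (fun x : ℝ => -(x + 1)) (-1) x :=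
  ((hasDerivAt_id x).add_const 1).neg

lemma hasDerivAt_G {x : ℝ} (hx : x ≠ -1) : HasDerivAt G (G' x) x := by
  have hv : -(x + 1) ≠ 0 := by contrapose! hx; linarith
  have hφu := (hasDerivAt_mul_log (sq_add_self_add_one_pos x).ne').comp x
    (hasDerivAt_sq_add_self_add_one x)
  have hφv := (hasDerivAt_mul_log hv).comp x (hasDerivAt_neg_add_one x)
  refine ((hφu.add hφv).sub (hasDerivAt_pow 2 x)).congr_deriv ?_
  simp only [G', Nat.cast_ofNat]
  ring

lemma hasDerivAt_G' {x : ℝ} (hx : x ≠ -1) : HasDerivAt G' (G'' x) x := by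
  have hv : -(x + 1) ≠ 0 := by contrapose! hx; linarith
  have hlogu := (hasDerivAt_sq_add_self_add_one x).log (sq_add_self_add_one_pos x).ne'
  have hlogv := (hasDerivAt_neg_add_one x).log hv
  have hlin : HasDerivAt (fun x : ℝ => 2*x + 1) 2 x := by
    simpa using ((hasDerivAt_id x).const_mul 2).add_const 1
  refine ((hlin.mul hlogu).sub hlogv).congr_deriv ?_
  simp only [G'', div_neg, neg_div]
  ring

lemma G''_pos {x : ℝ} (hx : x < -1) : 0 < G'' x := by
  have hlog : 0 < log (x^2 + x + 1) := log_pos (one_lt_sq_add_self_add_one hx)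
  have hsq : 0 ≤ (2*x + 1)^2 / (x^2 + x + 1) :=
    div_nonneg (sq_nonneg _) (sq_add_self_add_one_pos x).le
  have hinv : 0 < 1 / (-(x + 1)) := one_div_pos.mpr (by linarith)
  unfold G''
  linarith

lemma g_eqOn_G : EqOn g G (Iic (-1)) := by
  intro x (hx : x ≤ -1)
  rcases hx.lt_or_eq with hx | rfl
  · simp only [g, G, if_pos hx]
    ring
  · norm_num [g, G]

lemma g_eventuallyEq_G {x : ℝ} (hx : x < -1) : g =ᶠ[𝓝 x] G := by
  filter_upwards [Iio_mem_nhds hx] with y hy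
  exact g_eqOn_G (mem_Iic.mpr hy.le)

lemma hasDerivAt_g {x : ℝ} (hx : x < -1) : HasDerivAt g (G' x) x :=
  (hasDerivAt_G hx.ne).congr_of_eventuallyEq (g_eventuallyEq_G hx)

lemma deriv_deriv_g {x : ℝ} (hx : x < -1) : deriv (deriv g) x = G'' x := by
  have hderiv : deriv g =ᶠ[𝓝 x] G' := by
    filter_upwards [Iio_mem_nhds hx] with y hy
    exact (hasDerivAt_g hy).deriv
  rw [hderiv.deriv_eq]
  exact (hasDerivAt_G' hx.ne).deriv

lemma convexOn_g : ConvexOn ℝ (Iic (-1)) g := by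
  refine convexOn_of_hasDerivWithinAt2_nonneg (f' := G') (f'' := G'') (convex_Iic _)
    (continuous_G.continuousOn.congr g_eqOn_G) ?_ ?_ ?_ <;> rw [interior_Iic]
  · exact fun x hx => (hasDerivAt_g hx).hasDerivWithinAt
  · exact fun x hx => (hasDerivAt_G' (ne_of_lt hx)).hasDerivWithinAt
  · exact fun x hx => (G''_pos hx).le

lemma log_three_lt : log 3 < 4 / 3 := by
  have hsplit : log 3 = log 2 + log (3 / 2) := by
    rw [← log_mul (by norm_num) (by norm_num)]
    norm_num
  have h32 : log (3 / 2) ≤ 3 / 2 - 1 := log_le_sub_one_of_pos (by norm_num)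
  linarith [log_two_lt_d9]

lemma g_neg_two_neg : g (-2) < 0 := by
  have hval : g (-2) = 3 * log 3 - 4 := by norm_num [g]
  linarith [log_three_lt]

theorem g_convex_neg :
    let g : ℝ → ℝ := fun x =>
      if x < -1 then
        (x^2 + x + 1) * Real.log (x^2 + x + 1) - (x + 1) * Real.log (-(x + 1)) - x^2
      else -1
    ConvexOn ℝ (Set.Iic (-1 : ℝ)) g ∧
    (∀ x : ℝ, x < -1 →
      deriv (deriv g) x =
        2 * Real.log (x^2 + x + 1) + (2*x + 1)^2 / (x^2 + x + 1) + 1 / (-(x + 1)) ∧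
      0 < 2 * Real.log (x^2 + x + 1) + (2*x + 1)^2 / (x^2 + x + 1) + 1 / (-(x + 1))) ∧
    (∀ x ∈ Set.Icc (-2 : ℝ) (-1), g x < 0) := by
  refine ⟨convexOn_g, fun x hx => ⟨deriv_deriv_g hx, G''_pos hx⟩, fun x hx => ?_⟩
  have hseg : x ∈ segment ℝ (-2) (-1) := by rwa [segment_eq_Icc (by norm_num)]
  calc g x ≤ max (g (-2)) (g (-1)) :=
        convexOn_g.le_on_segment (by norm_num) (by norm_num) hseg
    _ < 0 := max_lt g_neg_two_neg (by norm_num [g])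
end

section
/- If x ∈ (−∞,−1) satisfies (x²+x+1)ln(x²+x+1) − (x+1)ln(−(x+1)) < x², then x > −√(2e). The key step is the log sum inequality: (x²+x+1)ln(x²+x+1) + (−(x+1))ln(−(x+1)) ≥ x² ln(x²/2), valid since (x²+x+1) + (−(x+1)) = x² and both summands are positive for x < −1. -/
open Real

/-- The two-term log sum inequality with weights `b₁ = b₂ = 1`; it is midpoint convexity of
`t ↦ t log t`. -/
lemma add_mul_log_half_le {a b : ℝ} (ha : 0 ≤ a) (hb : 0 ≤ b) :
    (a + b) * log ((a + b) / 2) ≤ a * log a + b * log b := by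
  have hconv := convexOn_mul_log.2 (Set.mem_Ici.mpr ha) (Set.mem_Ici.mpr hb)
    (by norm_num : (0 : ℝ) ≤ 1 / 2) (by norm_num : (0 : ℝ) ≤ 1 / 2) (by norm_num)
  simp only [smul_eq_mul] at hconv
  rw [show (1 / 2 : ℝ) * a + 1 / 2 * b = (a + b) / 2 by ring] at hconv
  linarith

lemma sq_mul_log_sq_half_le {x : ℝ} (hx : x < -1) :
    x ^ 2 * log (x ^ 2 / 2) ≤
      (x ^ 2 + x + 1) * log (x ^ 2 + x + 1) + (-(x + 1)) * log (-(x + 1)) := by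
  have h := add_mul_log_half_le (a := x ^ 2 + x + 1) (b := -(x + 1))
    (by nlinarith [sq_nonneg (x + 1 / 2)]) (by linarith)
  rwa [show x ^ 2 + x + 1 + -(x + 1) = x ^ 2 by ring] at h

lemma lt_two_mul_exp_one_of_mul_log_half_lt {y : ℝ} (hy : 0 < y) (h : y * log (y / 2) < y) :
    y < 2 * exp 1 := by
  have hlog : log (y / 2) < 1 := by
    by_contra! hle
    nlinarith
  rw [log_lt_iff_lt_exp (by positivity)] at hlog
  linarith

theorem IAS_lower_bound :
    (∀ x : ℝ, x < -1 →
      (x^2 + x + 1) * Real.log (x^2 + x + 1) - (x + 1) * Real.log (-(x + 1)) < x^2 →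
      x > -Real.sqrt (2 * Real.exp 1)) ∧
    (∀ x : ℝ, x < -1 →
      (x^2 + x + 1) * Real.log (x^2 + x + 1) + (-(x + 1)) * Real.log (-(x + 1))
        ≥ x^2 * Real.log (x^2 / 2)) := by
  refine ⟨fun x hx hlt => ?_, fun x hx => sq_mul_log_sq_half_le hx⟩
  apply neg_sqrt_lt_of_sq_lt
  apply lt_two_mul_exp_one_of_mul_log_half_lt (by nlinarith)
  linarith [sq_mul_log_sq_half_le hx]
end
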